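/- arXiv:2005.03574 — 5 statements merged into one kernel-verified Lean document; each statement's English description precedes it below -/
import Mathlib

section
/- Let V₋₁ := V₁' be the dual of V₁ with Riesz isomorphism R₁ : V₋₁ → V₁, and let Φ_k ∈ V₋₁ be the functional ⟨Φ_k, v⟩ = ⟨φ_k, v⟩₀. Then the V₋₁-orthonormal eigenpairs of the interpolation couple (V₋₁, V₀) are exactly (λ_k Φ_k, λ_k²): that is, (λ_k Φ_k) is a V₋₁-orthonormal basis and ⟨Ψ_k, f⟩ = λ_k² ⟨Ψ_k, F⟩₋₁ for all F ∈ V₀ identified via f, where Ψ_k = λ_k Φ_k. -/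
/-!
The Riesz map `R₁` of `V₁` sends the functional of `f ∈ V₀` to `ι† f`, and the eigenrelation
in `V₁` says `ι† (ι φ_k) = λ_k⁻² φ_k`; hence `R₁ Ψ_k = λ_k⁻¹ φ_k`. Orthonormality of `(Ψ_k)`
in `V₋₁` and the eigenrelation `λ_k² ⟨Ψ_k, F⟩₋₁ = λ_k ⟨φ_k, ι† f⟩₁ = λ_k ⟨φ_k, f⟩₀` are then
direct computations. For density, `R₁` is an isometric isomorphism, so it suffices that `(φ_k)`
spans a dense subspace of `V₁`: if `v` is `V₁`-orthogonal to every `φ_k`, then `ι v` is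
`V₀`-orthogonal to the total family `(ι φ_k)`, so `ι v = 0` and `v = 0` by injectivity.
-/

open scoped RealInnerProductSpace

section

open Submodule InnerProductSpace ContinuousLinearMap

theorem dense_span_range_iff_forall_inner_eq_zero {𝕜 E ι : Type*} [RCLike 𝕜]
    [NormedAddCommGroup E] [InnerProductSpace 𝕜 E] [CompleteSpace E] (v : ι → E) :
    Dense (span 𝕜 (Set.range v) : Set E) ↔ ∀ x, (∀ k, inner 𝕜 (v k) x = 0) → x = 0 := by
  rw [dense_iff_topologicalClosure_eq_top, topologicalClosure_eq_top_iff, eq_bot_iff]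
  refine forall_congr' fun x => imp_congr_left ?_
  rw [← span_singleton_le_iff_mem, ← isOrtho_iff_le, isOrtho_span]
  simp [inner_eq_zero_symm]

theorem Dense.span_range_comp {R R₂ E F ι : Type*} [Semiring R] [Semiring R₂] {σ : R →+* R₂}
    [RingHomSurjective σ] [TopologicalSpace E] [AddCommMonoid E] [Module R E]
    [TopologicalSpace F] [AddCommMonoid F] [Module R₂ F]
    {v : ι → E} (hv : Dense (span R (Set.range v) : Set E)) (e : E →SL[σ] F)
    (he : DenseRange e) : Dense (span R₂ (Set.range (e ∘ v)) : Set F) := by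
  rw [Set.range_comp, ← coe_coe, ← map_span, map_coe]
  exact he.dense_image e.continuous hv

theorem Dense.span_range_smul {K E ι : Type*} [DivisionRing K] [TopologicalSpace E]
    [AddCommGroup E] [Module K E] {v : ι → E} (hv : Dense (span K (Set.range v) : Set E))
    {c : ι → K} (hc : ∀ k, c k ≠ 0) : Dense (span K (Set.range fun k => c k • v k) : Set E) := by
  refine hv.mono (span_le.mpr ?_)
  rintro _ ⟨k, rfl⟩
  rw [SetLike.mem_coe, ← inv_smul_smul₀ (hc k) (v k)]
  exact smul_mem _ _ (subset_span ⟨k, rfl⟩)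

theorem toDual_symm_innerSL_comp {𝕜 E F : Type*} [RCLike 𝕜]
    [NormedAddCommGroup E] [InnerProductSpace 𝕜 E] [CompleteSpace E]
    [NormedAddCommGroup F] [InnerProductSpace 𝕜 F] [CompleteSpace F] (ι : E →L[𝕜] F) (f : F) :
    (toDual 𝕜 E).symm ((innerSL 𝕜 f).comp ι) = adjoint ι f := by
  rw [LinearIsometryEquiv.symm_apply_eq]
  ext v
  simp [adjoint_inner_left]

variable {V₀ V₁ : Type*}
    [NormedAddCommGroup V₀] [InnerProductSpace ℝ V₀] [CompleteSpace V₀]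
    [NormedAddCommGroup V₁] [InnerProductSpace ℝ V₁] [CompleteSpace V₁]

theorem adjoint_apply_apply_eq_smul {ι : V₁ →L[ℝ] V₀} {x : V₁} {c : ℝ} (hc : c ≠ 0)
    (h : ∀ v, ⟪x, v⟫ = c * ⟪ι x, ι v⟫) : adjoint ι (ι x) = c⁻¹ • x := by
  refine ext_inner_right ℝ fun v => ?_
  rw [adjoint_inner_left, real_inner_smul_left, h, inv_mul_cancel_left₀ hc]

theorem dense_span_range_of_inner_eq_mul {κ : Type*} {ι : V₁ →L[ℝ] V₀}
    (hinj : Function.Injective ι) {φ : κ → V₁}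
    (htot : Dense (span ℝ (Set.range fun k => ι (φ k)) : Set V₀)) {c : κ → ℝ}
    (hc : ∀ k, c k ≠ 0) (h : ∀ k v, ⟪φ k, v⟫ = c k * ⟪ι (φ k), ι v⟫) :
    Dense (span ℝ (Set.range φ) : Set V₁) := by
  rw [dense_span_range_iff_forall_inner_eq_zero] at htot ⊢
  refine fun x hx => hinj ?_
  rw [htot (ι x) fun k => ?_, map_zero]
  simpa [hx k, hc k] using h k x

end

theorem dual_eigenpairs_general
    {V₀ V₁ : Type*}
    [NormedAddCommGroup V₀] [InnerProductSpace ℝ V₀] [CompleteSpace V₀]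
    [NormedAddCommGroup V₁] [InnerProductSpace ℝ V₁] [CompleteSpace V₁]
    (ι : V₁ →L[ℝ] V₀) (hinj : Function.Injective ι)
    (φ : ℕ → V₁) (lam : ℕ → ℝ) (hlam : ∀ k, 0 < lam k)
    (hON : Orthonormal ℝ (fun k => ι (φ k)))
    (htot : Dense ((Submodule.span ℝ (Set.range fun k => ι (φ k)) : Submodule ℝ V₀) : Set V₀))
    (heig : ∀ k (v : V₁), ⟪φ k, v⟫ = (lam k) ^ 2 * ⟪ι (φ k), ι v⟫) :
    -- with `R₁` the Riesz map of `V₁`, `Φ_k` the functional `v ↦ ⟨φ_k, v⟩₀`, `Ψ_k = λ_k Φ_k`: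
    (∀ j k : ℕ,
        ((lam j • ((innerSL ℝ (ι (φ j))).comp ι) : StrongDual ℝ V₁))
          ((InnerProductSpace.toDual ℝ V₁).symm
            (lam k • ((innerSL ℝ (ι (φ k))).comp ι)))
          = if j = k then 1 else 0) ∧
    Dense ((Submodule.span ℝ
        (Set.range fun k => (lam k • ((innerSL ℝ (ι (φ k))).comp ι) : StrongDual ℝ V₁))
        : Submodule ℝ (StrongDual ℝ V₁)) : Set (StrongDual ℝ V₁)) ∧
    (∀ (f : V₀) (k : ℕ),
        lam k * ⟪ι (φ k), f⟫
          = (lam k) ^ 2 *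
            ((lam k • ((innerSL ℝ (ι (φ k))).comp ι) : StrongDual ℝ V₁))
              ((InnerProductSpace.toDual ℝ V₁).symm ((innerSL ℝ f).comp ι))) := by
  set Ψ : ℕ → StrongDual ℝ V₁ := fun k => lam k • (innerSL ℝ (ι (φ k))).comp ι
  set R₁ := InnerProductSpace.toDual ℝ V₁
  have hlam0 k : lam k ≠ 0 := (hlam k).ne'
  have hRΨ k : R₁.symm (Ψ k) = (lam k)⁻¹ • φ k := by
    rw [LinearIsometryEquiv.map_smulₛₗ, toDual_symm_innerSL_comp,
      adjoint_apply_apply_eq_smul (pow_ne_zero 2 (hlam0 k)) (heig k), smul_smul]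
    simp [hlam0 k, sq]
  refine ⟨fun j k => ?_, ?_, fun f k => ?_⟩
  · simp only [Ψ, hRΨ, smul_apply, ContinuousLinearMap.comp_apply, map_smul, innerSL_apply_apply,
      orthonormal_iff_ite.mp hON j k, smul_eq_mul]
    split_ifs with hjk
    · subst hjk; simp [hlam0]
    · simp
  · have hφ := dense_span_range_of_inner_eq_mul hinj htot (fun k => pow_ne_zero 2 (hlam0 k)) heig
    have hΨ : Ψ = R₁ ∘ fun k => (lam k)⁻¹ • φ k :=
      funext fun k => by rw [Function.comp_apply, ← hRΨ, LinearIsometryEquiv.apply_symm_apply]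
    rw [hΨ]
    exact (hφ.span_range_smul fun k => inv_ne_zero (hlam0 k)).span_range_comp
      (R₁ : V₁ →SL[starRingEnd ℝ] StrongDual ℝ V₁) R₁.surjective.denseRange
  · rw [toDual_symm_innerSL_comp]
    calc lam k * ⟪ι (φ k), f⟫ = lam k * ⟪φ k, ι.adjoint f⟫ := by
          rw [ContinuousLinearMap.adjoint_inner_right]
      _ = lam k ^ 2 * (lam k * ⟪ι (φ k), ι (ι.adjoint f)⟫) := by rw [heig]; ring

/-- The `V₋₁`-orthonormal eigenpairs of the dual interpolation couple
`(V₋₁, V₀)` are exactly `(λ_k Φ_k, λ_k²)`: the family `Ψ_k := λ_k Φ_k` is a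
`V₋₁`-orthonormal basis (orthonormal and with dense span) and satisfies the eigenvalue
relation `⟨Ψ_k, f⟩ = λ_k² ⟨Ψ_k, F⟩₋₁` for every `F ∈ V₀` identified with `f`. -/
theorem dual_eigenpairs
    {V₀ V₁ : Type*}
    [NormedAddCommGroup V₀] [InnerProductSpace ℝ V₀] [CompleteSpace V₀]
    [NormedAddCommGroup V₁] [InnerProductSpace ℝ V₁] [CompleteSpace V₁]
    (ι : V₁ →L[ℝ] V₀) (hinj : Function.Injective ι) (hdense : DenseRange ι)
    (φ : ℕ → V₁) (lam : ℕ → ℝ) (hlam : ∀ k, 0 < lam k)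
    (hON : Orthonormal ℝ (fun k => ι (φ k)))
    (htot : Dense ((Submodule.span ℝ (Set.range fun k => ι (φ k)) : Submodule ℝ V₀) : Set V₀))
    (heig : ∀ k (v : V₁), ⟪φ k, v⟫ = (lam k) ^ 2 * ⟪ι (φ k), ι v⟫) :
    -- with `R₁` the Riesz map of `V₁`, `Φ_k` the functional `v ↦ ⟨φ_k, v⟩₀`, `Ψ_k = λ_k Φ_k`:
    (∀ j k : ℕ,
        ((lam j • ((innerSL ℝ (ι (φ j))).comp ι) : StrongDual ℝ V₁))
          ((InnerProductSpace.toDual ℝ V₁).symm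
            (lam k • ((innerSL ℝ (ι (φ k))).comp ι)))
          = if j = k then 1 else 0) ∧
    Dense ((Submodule.span ℝ
        (Set.range fun k => (lam k • ((innerSL ℝ (ι (φ k))).comp ι) : StrongDual ℝ V₁))
        : Submodule ℝ (StrongDual ℝ V₁)) : Set (StrongDual ℝ V₁)) ∧
    (∀ (f : V₀) (k : ℕ),
        lam k * ⟪ι (φ k), f⟫
          = (lam k) ^ 2 *
            ((lam k • ((innerSL ℝ (ι (φ k))).comp ι) : StrongDual ℝ V₁))
              ((InnerProductSpace.toDual ℝ V₁).symm ((innerSL ℝ f).comp ι))) :=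
  dual_eigenpairs_general ι hinj φ lam hlam hON htot heig
end

section
/- For s ∈ (0,1) and F ∈ [V₋₁, V₀]_{1−s}, the Hilbert extrapolation norm equals the dual Hilbert interpolation norm: Σ_k λ_k^{−2s} ⟨F, φ_k⟩² = Σ_k λ_k^{2(1−s)} ⟨F, Ψ_k⟩₋₁², where (Ψ_k, λ_k²) = (λ_k Φ_k, λ_k²) are the eigenpairs of (V₋₁, V₀). -/
open scoped RealInnerProductSpace

/-!
By the eigenvalue relation `⟪φ_k, v⟫₁ = λ_k² ⟪φ_k, v⟫₀`, the Riesz representative in `V₁` of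
`Ψ_k = λ_k ⟪ι φ_k, ι ·⟫₀` is `λ_k⁻¹ φ_k`. Hence `⟨F, Ψ_k⟩₋₁ = λ_k⁻¹ F(φ_k)`, and the two series
agree term by term since `λ^{2(1-s)} λ^{-2} = λ^{-2s}`.
-/

section RieszRepresentative

variable {V₀ V₁ : Type*}
  [NormedAddCommGroup V₀] [InnerProductSpace ℝ V₀]
  [NormedAddCommGroup V₁] [InnerProductSpace ℝ V₁] [CompleteSpace V₁]

theorem toDual_symm_smul_innerSL_comp_eq_inv_smul (ι : V₁ →L[ℝ] V₀) {u : V₁} {μ : ℝ}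
    (hμ : μ ≠ 0) (hu : ∀ v, ⟪u, v⟫ = μ ^ 2 * ⟪ι u, ι v⟫) :
    (InnerProductSpace.toDual ℝ V₁).symm (μ • (innerSL ℝ (ι u)).comp ι) = μ⁻¹ • u := by
  rw [LinearIsometryEquiv.symm_apply_eq]
  ext v
  simp only [InnerProductSpace.toDual_apply_apply, smul_apply,
    ContinuousLinearMap.comp_apply, innerSL_apply_apply,
    real_inner_smul_left, hu v, smul_eq_mul]
  field_simp

end RieszRepresentative

theorem rpow_two_mul_one_sub_mul_inv_sq {x : ℝ} (hx : 0 < x) (s : ℝ) :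
    x ^ (2 * (1 - s)) * x⁻¹ ^ 2 = x ^ (-(2 : ℝ) * s) := by
  rw [inv_pow, ← Real.rpow_two, ← Real.rpow_neg hx.le, ← Real.rpow_add hx]
  ring_nf

theorem extrapolation_norm_eq_dual_interpolation_norm_general
    {V₀ V₁ : Type*}
    [NormedAddCommGroup V₀] [InnerProductSpace ℝ V₀]
    [NormedAddCommGroup V₁] [InnerProductSpace ℝ V₁] [CompleteSpace V₁]
    (ι : V₁ →L[ℝ] V₀)
    (φ : ℕ → V₁) (lam : ℕ → ℝ) (hlam : ∀ k, 0 < lam k)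
    (heig : ∀ k (v : V₁), ⟪φ k, v⟫ = (lam k) ^ 2 * ⟪ι (φ k), ι v⟫)
    (s : ℝ)
    (F : StrongDual ℝ V₁) :
    (∑' k, (lam k) ^ (-(2 : ℝ) * s) * (F (φ k)) ^ 2)
      = ∑' k, (lam k) ^ (2 * (1 - s)) *
          (F ((InnerProductSpace.toDual ℝ V₁).symm
            (lam k • ((innerSL ℝ (ι (φ k))).comp ι)))) ^ 2 := by
  refine tsum_congr fun k => ?_
  rw [toDual_symm_smul_innerSL_comp_eq_inv_smul ι (hlam k).ne' (heig k), map_smul, smul_eq_mul,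
    mul_pow, ← mul_assoc, rpow_two_mul_one_sub_mul_inv_sq (hlam k)]

/-- For `s ∈ (0,1)` and `F ∈ [V₋₁,V₀]_{1−s}`, the Hilbert
extrapolation norm equals the dual Hilbert interpolation norm:
`Σ_k λ_k^{−2s} ⟨F,φ_k⟩² = Σ_k λ_k^{2(1−s)} ⟨F,Ψ_k⟩₋₁²` with `Ψ_k = λ_k Φ_k`. -/
theorem extrapolation_norm_eq_dual_interpolation_norm
    {V₀ V₁ : Type*}
    [NormedAddCommGroup V₀] [InnerProductSpace ℝ V₀] [CompleteSpace V₀]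
    [NormedAddCommGroup V₁] [InnerProductSpace ℝ V₁] [CompleteSpace V₁]
    (ι : V₁ →L[ℝ] V₀) (hinj : Function.Injective ι) (hdense : DenseRange ι)
    (φ : ℕ → V₁) (lam : ℕ → ℝ) (hlam : ∀ k, 0 < lam k)
    (hON : Orthonormal ℝ (fun k => ι (φ k)))
    (heig : ∀ k (v : V₁), ⟪φ k, v⟫ = (lam k) ^ 2 * ⟪ι (φ k), ι v⟫)
    (s : ℝ) (hs : s ∈ Set.Ioo (0 : ℝ) 1)
    (F : StrongDual ℝ V₁)
    (hmem : Summable fun k => (lam k) ^ (-(2 : ℝ) * s) * (F (φ k)) ^ 2) :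
    (∑' k, (lam k) ^ (-(2 : ℝ) * s) * (F (φ k)) ^ 2)
      = ∑' k, (lam k) ^ (2 * (1 - s)) *
          (F ((InnerProductSpace.toDual ℝ V₁).symm
            (lam k • ((innerSL ℝ (ι (φ k))).comp ι)))) ^ 2 :=
  extrapolation_norm_eq_dual_interpolation_norm_general ι φ lam hlam heig s F
end

section
/- Let f ∈ V₀ with associated functional F ∈ V₋₁. For t > 0, the minimizer v*(t) of the dual K-functional K²_{(V₋₁,V₀)}(t;F) coincides with the minimizer v(t) of K²_{(V₀,V₁)}(t;f), in the sense that ⟨v*(t), w⟩ = ⟨v(t), w⟩₀ for all w ∈ V₁. -/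
open scoped RealInnerProductSpace

/-!
For the Hilbert adjoint `ι*` of the embedding, the eigen-relation reads `ι* (ι φₖ) = λₖ⁻² φₖ`.
Every functional `⟪g, ι ·⟫₀` on `V₁`, in particular `Ψₖ`, is the Riesz representative of `ι* g`,
so each term of the dual series is the image of the corresponding term of the series for `v(t)`
under the continuous map `g ↦ Riesz (ι* g)`. That map commutes with the sum, which converges in
`V₀` because its coefficients are damped Fourier coefficients of `f`.
-/

open ContinuousLinearMap InnerProductSpace

theorem Orthonormal.summable_inner_div_smul {E ι : Type*} [NormedAddCommGroup E]
    [InnerProductSpace ℝ E] [CompleteSpace E] {e : ι → E} (he : Orthonormal ℝ e) (x : E)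
    {d : ι → ℝ} (hd : ∀ i, 1 ≤ d i) : Summable fun i => (⟪e i, x⟫ / d i) • e i := by
  have hcoeff : Summable fun i => ‖⟪e i, x⟫ / d i‖ ^ 2 := by
    refine (he.inner_products_summable x).of_nonneg_of_le (fun i => by positivity) fun i => ?_
    gcongr
    rw [norm_div, Real.norm_of_nonneg (zero_le_one.trans (hd i))]
    exact div_le_self (norm_nonneg _) (hd i)
  simpa using (he.orthogonalFamily.summable_iff_norm_sq_summable _).mpr hcoeff

section Adjoint

variable {V₀ V₁ : Type*} [NormedAddCommGroup V₀] [InnerProductSpace ℝ V₀] [CompleteSpace V₀]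
  [NormedAddCommGroup V₁] [InnerProductSpace ℝ V₁] [CompleteSpace V₁] (ι : V₁ →L[ℝ] V₀)

theorem innerSL_comp_eq_toDual_adjoint (g : V₀) :
    (innerSL ℝ g).comp ι = toDual ℝ V₁ (adjoint ι g) := by
  ext v
  simp [adjoint_inner_left]

theorem adjoint_apply_apply_of_inner_eq {x : V₁} {c : ℝ} (hc : c ≠ 0)
    (h : ∀ v, ⟪x, v⟫ = c * ⟪ι x, ι v⟫) : adjoint ι (ι x) = c⁻¹ • x := by
  refine ext_inner_right ℝ fun v => ?_
  rw [adjoint_inner_left, real_inner_smul_left, h, inv_mul_cancel_left₀ hc]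

end Adjoint

theorem dual_minimizer_coincides_general
    {V₀ V₁ : Type*}
    [NormedAddCommGroup V₀] [InnerProductSpace ℝ V₀] [CompleteSpace V₀]
    [NormedAddCommGroup V₁] [InnerProductSpace ℝ V₁] [CompleteSpace V₁]
    (ι : V₁ →L[ℝ] V₀)
    (φ : ℕ → V₁) (lam : ℕ → ℝ) (hlam : ∀ k, 0 < lam k)
    (hON : Orthonormal ℝ (fun k => ι (φ k)))
    (heig : ∀ k (v : V₁), ⟪φ k, v⟫ = (lam k) ^ 2 * ⟪ι (φ k), ι v⟫)
    (f : V₀) (t : ℝ) :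
    let F : StrongDual ℝ V₁ := (innerSL ℝ f).comp ι
    let Ψ : ℕ → StrongDual ℝ V₁ :=
      fun k => lam k • ((innerSL ℝ (ι (φ k))).comp ι)
    ∀ w : V₁,
      (∑' k, (F ((InnerProductSpace.toDual ℝ V₁).symm (Ψ k))
            / (1 + t ^ 2 * (lam k) ^ 2)) • Ψ k) w
        = ⟪∑' k, (⟪ι (φ k), f⟫ / (1 + t ^ 2 * (lam k) ^ 2)) • ι (φ k), ι w⟫ := by
  intro F Ψ w
  have hφ k : adjoint ι (ι (φ k)) = (lam k ^ 2)⁻¹ • φ k :=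
    adjoint_apply_apply_of_inner_eq ι (pow_ne_zero 2 (hlam k).ne') (heig k)
  have hΨ k : Ψ k = toDual ℝ V₁ ((lam k)⁻¹ • φ k) := by
    have hlk := (hlam k).ne'
    simp only [Ψ, innerSL_comp_eq_toDual_adjoint, hφ, ← map_smul, smul_smul]
    congr 2
    field_simp
  have hterm k : (F ((toDual ℝ V₁).symm (Ψ k)) / (1 + t ^ 2 * lam k ^ 2)) • Ψ k =
      toDual ℝ V₁ (adjoint ι ((⟪ι (φ k), f⟫ / (1 + t ^ 2 * lam k ^ 2)) • ι (φ k))) := by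
    have hlk := (hlam k).ne'
    simp only [hΨ, LinearIsometryEquiv.symm_apply_apply, F, coe_comp, Function.comp_apply,
      innerSL_apply_apply, map_smul, hφ, smul_smul, smul_eq_mul, real_inner_comm f]
    congr 1
    field_simp
  have hsum := hON.summable_inner_div_smul f fun k =>
    le_add_of_nonneg_right (by positivity : 0 ≤ t ^ 2 * lam k ^ 2)
  rw [tsum_congr hterm, ← LinearIsometryEquiv.coe_toContinuousLinearEquiv,
    ← ContinuousLinearEquiv.map_tsum, ← (adjoint ι).map_tsum hsum]
  exact adjoint_inner_left ι w _

/-- For `f ∈ V₀` with associated functional `F ∈ V₋₁`, the minimizer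
`v*(t)` of the dual K-functional `K²_{(V₋₁,V₀)}(t;F)` coincides with the minimizer `v(t)`
of `K²_{(V₀,V₁)}(t;f)`: `⟨v*(t), w⟩ = ⟨v(t), w⟩₀` for all `w ∈ V₁`. The minimizers are
given by their spectral expansions `v(t) = Σ_k ⟨f,φ_k⟩₀/(1+t²λ_k²) φ_k` and
`v*(t) = Σ_k ⟨F,Ψ_k⟩₋₁/(1+t²λ_k²) Ψ_k` with `Ψ_k = λ_k Φ_k`. -/
theorem dual_minimizer_coincides
    {V₀ V₁ : Type*}
    [NormedAddCommGroup V₀] [InnerProductSpace ℝ V₀] [CompleteSpace V₀]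
    [NormedAddCommGroup V₁] [InnerProductSpace ℝ V₁] [CompleteSpace V₁]
    (ι : V₁ →L[ℝ] V₀) (hinj : Function.Injective ι) (hdense : DenseRange ι)
    (φ : ℕ → V₁) (lam : ℕ → ℝ) (hlam : ∀ k, 0 < lam k)
    (hON : Orthonormal ℝ (fun k => ι (φ k)))
    (htot : Dense ((Submodule.span ℝ (Set.range fun k => ι (φ k)) : Submodule ℝ V₀) : Set V₀))
    (heig : ∀ k (v : V₁), ⟪φ k, v⟫ = (lam k) ^ 2 * ⟪ι (φ k), ι v⟫)
    (f : V₀) (t : ℝ) (ht : 0 < t) :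
    let F : StrongDual ℝ V₁ := (innerSL ℝ f).comp ι
    let Ψ : ℕ → StrongDual ℝ V₁ :=
      fun k => lam k • ((innerSL ℝ (ι (φ k))).comp ι)
    ∀ w : V₁,
      (∑' k, (F ((InnerProductSpace.toDual ℝ V₁).symm (Ψ k))
            / (1 + t ^ 2 * (lam k) ^ 2)) • Ψ k) w
        = ⟪∑' k, (⟪ι (φ k), f⟫ / (1 + t ^ 2 * (lam k) ^ 2)) • ι (φ k), ι w⟫ :=
  dual_minimizer_coincides_general ι φ lam hlam hON heig f t
end

section
/- Suppose f ∈ V_h excites only m distinct eigenvalues, i.e. |{λ_k² : ⟨f,φ_k⟩₀ ≠ 0}| = m. If r+1 ≥ m, then the reduced space V_r = span{v(t₀),…,v(t_r)} (snapshots at distinct t₀ = 0 < t₁ < ⋯ < t_r) contains the spectral projections f^{i_j} of f onto each excited eigenspace, and the eigenpairs of the reduced couple ((V_r,‖·‖₀),(V_r,‖·‖₁)) are exactly (f^{i_j}/‖f^{i_j}‖₀, λ_{i_j}²); consequently the reduced basis extrapolation norm is exact: ‖f‖²_{H_r^{−s}} = Σ_j λ_{i_j}^{−2s} ‖f^{i_j}‖₀²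 = ‖f‖²_{H^{−s}}. -/
open scoped RealInnerProductSpace
open Polynomial Finset Function

/-! In the eigenbasis the snapshot equation reads `(1 + t² λ_k²) ⟪φ_k, v(t)⟫ = ⟪f, φ_k⟫`, so
`v(t) = ∑ⱼ (1 + t² λ_{i_j}²)⁻¹ f^{i_j}` and `V_r ⊆ span {f^{i_j}}`. The coefficient matrix
`((1 + tᵢ² λ_{i_j}²)⁻¹)` of the first `m` snapshots is a Cauchy matrix: the nodes `tᵢ²` are
distinct because `0 = t₀ < t₁ < ⋯`, and the poles `λ_{i_j}²` are distinct, so it is invertible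
and every `f^{i_j}` lies in `V_r`. The `f^{i_j}` are mutually orthogonal eigenvectors of the
couple, hence they diagonalize the reduced couple and the reduced norm is the full spectral sum. -/

theorem eq_zero_of_forall_sum_div_one_add_mul_eq_zero {K ι : Type*} [Field K] [Fintype ι]
    {x μ : ι → K} (hx : Injective x) (hμ : Injective μ) (hμ0 : ∀ j, μ j ≠ 0)
    (hxμ : ∀ i j, 1 + x i * μ j ≠ 0) {u : ι → K}
    (hu : ∀ i, ∑ j, u j / (1 + x i * μ j) = 0) : u = 0 := by
  classical
  -- `Q` is `∑ⱼ u j / (1 + y μ j)` with denominators cleared: it has degree `< card ι`, vanishes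
  -- at every `x i`, and its value at the pole `-(μ j)⁻¹` is a nonzero multiple of `u j`.
  set Q : K[X] := ∑ j, C (u j) * ∏ l ∈ univ.erase j, (1 + X * C (μ l))
  have eval_Q : ∀ y, Q.eval y = ∑ j, u j * ∏ l ∈ univ.erase j, (1 + y * μ l) := by
    intro y
    simp only [Q, eval_finsetSum, eval_prod, eval_mul, eval_C, eval_add, eval_one, eval_X]
  have hQ_x : ∀ i, Q.eval (x i) = 0 := by
    intro i
    rw [eval_Q, ← mul_zero (∏ l, (1 + x i * μ l)), ← hu i, mul_sum]
    refine sum_congr rfl fun j _ => ?_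
    rw [← mul_prod_erase univ _ (mem_univ j)]
    field_simp [hxμ i j]
  funext j
  have hQ : Q = 0 := by
    refine eq_zero_of_natDegree_lt_card_of_eval_eq_zero Q hx hQ_x ?_
    have hdeg : Q.natDegree ≤ Fintype.card ι - 1 := by
      refine natDegree_sum_le_of_forall_le _ _ fun l _ => natDegree_C_mul_le _ _ |>.trans ?_
      calc (∏ i ∈ univ.erase l, (1 + X * C (μ i))).natDegree
          ≤ ∑ i ∈ univ.erase l, (1 + X * C (μ i)).natDegree := natDegree_prod_le _ _
        _ ≤ ∑ i ∈ univ.erase l, 1 := by gcongr with i; compute_degree!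
        _ = Fintype.card ι - 1 := by simp [card_erase_of_mem]
    have := Fintype.card_pos_iff.mpr ⟨j⟩
    omega
  have := eval_Q (-(μ j)⁻¹)
  rw [hQ, eval_zero, sum_eq_single j] at this
  · have hprod : ∏ l ∈ univ.erase j, (1 + -(μ j)⁻¹ * μ l) ≠ 0 := by
      refine prod_ne_zero_iff.mpr fun l hl h => (ne_of_mem_erase hl) (hμ ?_)
      field_simp [hμ0 j] at h
      linear_combination -h
    exact (mul_eq_zero.mp this.symm).resolve_right hprod
  · intro l _ hl
    rw [prod_eq_zero (mem_erase.mpr ⟨Ne.symm hl, mem_univ j⟩), mul_zero]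
    field_simp [hμ0 j]
    ring
  · simp

theorem Matrix.isUnit_of_inv_one_add_mul {K ι : Type*} [Field K] [Fintype ι] [DecidableEq ι]
    {x μ : ι → K} (hx : Injective x) (hμ : Injective μ) (hμ0 : ∀ j, μ j ≠ 0)
    (hxμ : ∀ i j, 1 + x i * μ j ≠ 0) :
    IsUnit (Matrix.of fun i j => (1 + x i * μ j)⁻¹) := by
  rw [Matrix.isUnit_iff_isUnit_det, isUnit_iff_ne_zero]
  intro hdet
  obtain ⟨u, hu, hAu⟩ := Matrix.exists_mulVec_eq_zero_iff.mpr hdet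
  refine hu (eq_zero_of_forall_sum_div_one_add_mul_eq_zero hx hμ hμ0 hxμ fun i => ?_)
  simpa [Matrix.mulVec, dotProduct, div_eq_inv_mul] using congrFun hAu i

theorem span_range_le_of_isUnit {R M ι : Type*} [CommRing R] [AddCommGroup M] [Module R M]
    [Fintype ι] [DecidableEq ι] {A : Matrix ι ι R} (hA : IsUnit A) {v w : ι → M}
    (hw : ∀ i, w i = ∑ j, A i j • v j) :
    Submodule.span R (Set.range v) ≤ Submodule.span R (Set.range w) := by
  rw [Submodule.span_le]
  rintro _ ⟨j, rfl⟩
  obtain ⟨c, hc⟩ := Matrix.vecMul_surjective_iff_isUnit.mpr hA (Pi.single j 1)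
  have hvj : v j = ∑ i, c i • w i := by
    simp_rw [hw, smul_sum, smul_smul]
    rw [sum_comm]
    simp_rw [← sum_smul]
    have hcA : ∀ l, ∑ i, c i * A i l = (Pi.single j 1 : ι → R) l := fun l => congrFun hc l
    simp [hcA, Pi.single_apply, ite_smul]
  exact (Submodule.mem_span_range_iff_exists_fun _).mpr ⟨c, hvj.symm⟩

theorem mul_eq_sum_ite_of_ne_zero {α κ R : Type*} [DecidableEq α] [Fintype κ]
    [NonUnitalNonAssocSemiring R]
    {μ : κ → α} (hμ : Injective μ) (c : α → R) {e : α} {a : R} (h : a ≠ 0 → ∃ j, e = μ j) :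
    c e * a = ∑ j, if e = μ j then c (μ j) * a else 0 := by
  by_cases ha : a = 0
  · simp [ha]
  obtain ⟨j, rfl⟩ := h ha
  rw [sum_eq_single_of_mem j (mem_univ j) fun b _ hb => if_neg fun h => hb (hμ h).symm, if_pos rfl]

theorem orthonormal_smul_inv_norm {ι E : Type*} [NormedAddCommGroup E] [InnerProductSpace ℝ E]
    {v : ι → E} (hv0 : ∀ i, v i ≠ 0) (hv : Pairwise fun i j => ⟪v i, v j⟫ = 0) :
    Orthonormal ℝ fun i => ‖v i‖⁻¹ • v i := by
  refine ⟨fun i => norm_smul_inv_norm (hv0 i), fun i j hij => ?_⟩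
  simp only [real_inner_smul_left, real_inner_smul_right, hv hij, mul_zero]

section SpectralProjection

variable {ι V : Type*} [Fintype ι] [NormedAddCommGroup V] [InnerProductSpace ℝ V]
  (φ : OrthonormalBasis ι ℝ V) (ev : ι → ℝ)

noncomputable def spectralProj (f : V) (μ : ℝ) : V :=
  ∑ k ∈ univ.filter (fun k => ev k = μ), ⟪f, φ k⟫ • φ k

variable {φ ev} {f : V}

theorem inner_basis_spectralProj (μ : ℝ) (k : ι) :
    ⟪φ k, spectralProj φ ev f μ⟫ = if ev k = μ then ⟪f, φ k⟫ else 0 := by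
  classical
  simp_rw [spectralProj, inner_sum, real_inner_smul_right, orthonormal_iff_ite.mp φ.orthonormal]
  simp [mul_ite, sum_ite_eq]

theorem inner_spectralProj_left (μ : ℝ) (w : V) :
    ⟪spectralProj φ ev f μ, w⟫ = ∑ k ∈ univ.filter (fun k => ev k = μ), ⟪f, φ k⟫ * ⟪φ k, w⟫ := by
  simp_rw [spectralProj, sum_inner, real_inner_smul_left]

theorem inner_spectralProj_of_ne {μ μ' : ℝ} (h : μ ≠ μ') :
    ⟪spectralProj φ ev f μ, spectralProj φ ev f μ'⟫ = 0 := by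
  rw [inner_spectralProj_left]
  refine sum_eq_zero fun k hk => ?_
  rw [inner_basis_spectralProj, if_neg ((mem_filter.mp hk).2 ▸ h), mul_zero]

theorem norm_spectralProj_sq (μ : ℝ) :
    ‖spectralProj φ ev f μ‖ ^ 2 = ∑ k ∈ univ.filter (fun k => ev k = μ), ⟪f, φ k⟫ ^ 2 := by
  rw [← real_inner_self_eq_norm_sq, inner_spectralProj_left]
  refine sum_congr rfl fun k hk => ?_
  rw [inner_basis_spectralProj, if_pos (mem_filter.mp hk).2, sq]

theorem spectralProj_ne_zero {μ : ℝ} (h : ∃ k, ev k = μ ∧ ⟪f, φ k⟫ ≠ 0) :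
    spectralProj φ ev f μ ≠ 0 := by
  obtain ⟨k, hk, hfk⟩ := h
  intro h0
  have hφk := inner_basis_spectralProj (φ := φ) (ev := ev) (f := f) μ k
  rw [h0, inner_zero_right, if_pos hk] at hφk
  exact hfk hφk.symm

theorem apply_spectralProj_eq_mul_inner (B : V → V → ℝ) (hB : ∀ w, IsLinearMap ℝ (B · w))
    (heig : ∀ k v, B (φ k) v = ev k * ⟪φ k, v⟫) (μ : ℝ) (w : V) :
    B (spectralProj φ ev f μ) w = μ * ⟪spectralProj φ ev f μ, w⟫ := by
  have hsum := map_sum (IsLinearMap.mk' _ (hB w)) (fun k => ⟪f, φ k⟫ • φ k)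
    (univ.filter fun k => ev k = μ)
  simp only [IsLinearMap.mk'_apply] at hsum
  rw [inner_spectralProj_left, spectralProj, hsum, mul_sum]
  refine sum_congr rfl fun k hk => ?_
  simp only [(hB w).map_smul, heig, (mem_filter.mp hk).2, smul_eq_mul]
  ring

variable {κ : Type*} [Fintype κ] {μ : κ → ℝ}

theorem eq_sum_smul_spectralProj (hμ : Injective μ)
    (hexc : ∀ k, ⟪f, φ k⟫ ≠ 0 → ∃ j, ev k = μ j) (c : ℝ → ℝ) {g : V}
    (hg : ∀ k, ⟪φ k, g⟫ = c (ev k) * ⟪f, φ k⟫) :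
    g = ∑ j, c (μ j) • spectralProj φ ev f (μ j) := by
  refine InnerProductSpace.ext_inner_left_basis φ.toBasis fun k => ?_
  simp_rw [OrthonormalBasis.coe_toBasis, hg, inner_sum, real_inner_smul_right,
    inner_basis_spectralProj, mul_ite, mul_zero]
  exact mul_eq_sum_ite_of_ne_zero hμ c (hexc k)

theorem sum_mul_norm_spectralProj_sq (hμ : Injective μ)
    (hexc : ∀ k, ⟪f, φ k⟫ ≠ 0 → ∃ j, ev k = μ j) (c : ℝ → ℝ) :
    ∑ j, c (μ j) * ‖spectralProj φ ev f (μ j)‖ ^ 2 = ∑ k, c (ev k) * ⟪f, φ k⟫ ^ 2 := by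
  have hexc' : ∀ k, ⟪f, φ k⟫ ^ 2 ≠ 0 → ∃ j, ev k = μ j := fun k h =>
    hexc k fun h0 => h (by rw [h0, sq, mul_zero])
  simp_rw [fun k => mul_eq_sum_ite_of_ne_zero hμ c (hexc' k), norm_spectralProj_sq, mul_sum]
  rw [sum_comm]
  refine sum_congr rfl fun j _ => ?_
  rw [sum_filter]

theorem resolvent_eq_sum_smul_spectralProj (B : V → V → ℝ) (hBsymm : ∀ v w, B v w = B w v)
    (heig : ∀ k v, B (φ k) v = ev k * ⟪φ k, v⟫) (hμ : Injective μ)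
    (hexc : ∀ k, ⟪f, φ k⟫ ≠ 0 → ∃ j, ev k = μ j) {τ : ℝ} (hτ : ∀ k, 1 + τ * ev k ≠ 0) {v : V}
    (hv : ∀ w, ⟪v, w⟫ + τ * B v w = ⟪f, w⟫) :
    v = ∑ j, (1 + τ * μ j)⁻¹ • spectralProj φ ev f (μ j) := by
  refine eq_sum_smul_spectralProj hμ hexc (fun y => (1 + τ * y)⁻¹) fun k => ?_
  have hk := hv (φ k)
  rw [hBsymm, heig, real_inner_comm] at hk
  field_simp [hτ k]
  linear_combination hk

end SpectralProjection

theorem reduced_space_exactness_general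
    {V : Type*} [NormedAddCommGroup V] [InnerProductSpace ℝ V] {N : ℕ}
    (φ : OrthonormalBasis (Fin N) ℝ V) (lam : Fin N → ℝ) (hlam : ∀ k, 0 < lam k)
    (ip1 : V → V → ℝ)
    (hsymm : ∀ v w, ip1 v w = ip1 w v)
    (hadd : ∀ u v w, ip1 (u + v) w = ip1 u w + ip1 v w)
    (hsmul : ∀ (c : ℝ) (v w : V), ip1 (c • v) w = c * ip1 v w)
    (heig : ∀ k (v : V), ip1 (φ k) v = (lam k) ^ 2 * ⟪φ k, v⟫)
    (f : V) (m : ℕ) (idx : Fin m → Fin N)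
    (hdist : StrictMono fun j => (lam (idx j)) ^ 2)
    (hexc₁ : ∀ k, ⟪f, φ k⟫ ≠ 0 → ∃ j, (lam k) ^ 2 = (lam (idx j)) ^ 2)
    (hexc₂ : ∀ j, ∃ k, (lam k) ^ 2 = (lam (idx j)) ^ 2 ∧ ⟪f, φ k⟫ ≠ 0)
    (r : ℕ) (t : Fin (r + 1) → ℝ) (ht0 : t 0 = 0) (hmono : StrictMono t)
    (hmr : m ≤ r + 1)
    (vs : Fin (r + 1) → V)
    (hvs : ∀ i, ∀ w : V, ⟪vs i, w⟫ + (t i) ^ 2 * ip1 (vs i) w = ⟪f, w⟫)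
    (s : ℝ) :
    let P : Fin m → V := fun j =>
      ∑ k ∈ Finset.univ.filter (fun k => (lam k) ^ 2 = (lam (idx j)) ^ 2),
        ⟪f, φ k⟫ • φ k
    let Vr : Submodule ℝ V := Submodule.span ℝ (Set.range vs)
    (∀ j, P j ∈ Vr) ∧
    Vr = Submodule.span ℝ (Set.range P) ∧
    (∀ j, ∀ w ∈ Vr, ip1 (P j) w = (lam (idx j)) ^ 2 * ⟪P j, w⟫) ∧
    Orthonormal ℝ (fun j => ‖P j‖⁻¹ • P j) ∧
    (∑ j, ((lam (idx j)) ^ 2) ^ (-s) * ‖P j‖ ^ 2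
        = ∑ k, ((lam k) ^ 2) ^ (-s) * ⟪f, φ k⟫ ^ 2) := by
  intro P Vr
  set μ : Fin m → ℝ := fun j => lam (idx j) ^ 2
  have hμ : Injective μ := hdist.injective
  have ht : ∀ i, 0 ≤ t i := fun i => ht0 ▸ hmono.monotone (Fin.zero_le i)
  have hvsP : ∀ i, vs i = ∑ j, (1 + t i ^ 2 * μ j)⁻¹ • P j := fun i =>
    resolvent_eq_sum_smul_spectralProj ip1 hsymm heig hμ hexc₁
      (fun k => by have := hlam k; positivity) (hvs i)
  have hPVr : Submodule.span ℝ (Set.range P) ≤ Vr := by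
    set x : Fin m → ℝ := fun i => t (Fin.castLE hmr i) ^ 2
    have hx : Injective x := fun a b hab => Fin.castLE_injective hmr <|
      hmono.injective ((pow_left_inj₀ (ht _) (ht _) two_ne_zero).mp hab)
    have hA := Matrix.isUnit_of_inv_one_add_mul hx hμ (fun j => by have := hlam (idx j); positivity)
      (fun i j => by have := hlam (idx j); positivity)
    exact (span_range_le_of_isUnit hA fun i => hvsP _).trans
      (Submodule.span_mono (Set.range_comp_subset_range _ _))
  have hVrP : Vr ≤ Submodule.span ℝ (Set.range P) := Submodule.span_le.mpr <| by
    rintro _ ⟨i, rfl⟩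
    exact (Submodule.mem_span_range_iff_exists_fun _).mpr ⟨_, (hvsP i).symm⟩
  refine ⟨fun j => hPVr (Submodule.subset_span ⟨j, rfl⟩), le_antisymm hVrP hPVr,
    fun j w _ => apply_spectralProj_eq_mul_inner ip1
      (fun w => ⟨fun u v => hadd u v w, fun c v => hsmul c v w⟩) heig _ w,
    orthonormal_smul_inv_norm (fun j => spectralProj_ne_zero (hexc₂ j))
      fun j j' h => inner_spectralProj_of_ne (hμ.ne h),
    sum_mul_norm_spectralProj_sq hμ hexc₁ (· ^ (-s))⟩

/-- If `f` excites only `m` distinct eigenvalues and `r+1 ≥ m`, then the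
reduced space `V_r = span{v(t₀),…,v(t_r)}` contains the spectral projections `f^{i_j}` of
`f` onto the excited eigenspaces, `V_r` is spanned by them, the eigenpairs of the reduced
couple `((V_r,‖·‖₀),(V_r,‖·‖₁))` are exactly `(f^{i_j}/‖f^{i_j}‖₀, λ_{i_j}²)`, and the
reduced basis extrapolation norm is exact:
`‖f‖²_{H_r^{−s}} = Σ_j λ_{i_j}^{−2s}‖f^{i_j}‖₀² = ‖f‖²_{H^{−s}}`. -/
theorem reduced_space_exactness
    {V : Type*} [NormedAddCommGroup V] [InnerProductSpace ℝ V] {N : ℕ}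
    (φ : OrthonormalBasis (Fin N) ℝ V) (lam : Fin N → ℝ) (hlam : ∀ k, 0 < lam k)
    (ip1 : V → V → ℝ)
    (hsymm : ∀ v w, ip1 v w = ip1 w v)
    (hadd : ∀ u v w, ip1 (u + v) w = ip1 u w + ip1 v w)
    (hsmul : ∀ (c : ℝ) (v w : V), ip1 (c • v) w = c * ip1 v w)
    (heig : ∀ k (v : V), ip1 (φ k) v = (lam k) ^ 2 * ⟪φ k, v⟫)
    (f : V) (m : ℕ) (idx : Fin m → Fin N)
    (hdist : StrictMono fun j => (lam (idx j)) ^ 2)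
    (hexc₁ : ∀ k, ⟪f, φ k⟫ ≠ 0 → ∃ j, (lam k) ^ 2 = (lam (idx j)) ^ 2)
    (hexc₂ : ∀ j, ∃ k, (lam k) ^ 2 = (lam (idx j)) ^ 2 ∧ ⟪f, φ k⟫ ≠ 0)
    (r : ℕ) (t : Fin (r + 1) → ℝ) (ht0 : t 0 = 0) (hmono : StrictMono t)
    (hmr : m ≤ r + 1)
    (vs : Fin (r + 1) → V)
    (hvs : ∀ i, ∀ w : V, ⟪vs i, w⟫ + (t i) ^ 2 * ip1 (vs i) w = ⟪f, w⟫)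
    (s : ℝ) (hs : s ∈ Set.Ioo (0 : ℝ) 1) :
    let P : Fin m → V := fun j =>
      ∑ k ∈ Finset.univ.filter (fun k => (lam k) ^ 2 = (lam (idx j)) ^ 2),
        ⟪f, φ k⟫ • φ k
    let Vr : Submodule ℝ V := Submodule.span ℝ (Set.range vs)
    (∀ j, P j ∈ Vr) ∧
    Vr = Submodule.span ℝ (Set.range P) ∧
    (∀ j, ∀ w ∈ Vr, ip1 (P j) w = (lam (idx j)) ^ 2 * ⟪P j, w⟫) ∧
    Orthonormal ℝ (fun j => ‖P j‖⁻¹ • P j) ∧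
    (∑ j, ((lam (idx j)) ^ 2) ^ (-s) * ‖P j‖ ^ 2
        = ∑ k, ((lam k) ^ 2) ^ (-s) * ⟪f, φ k⟫ ^ 2) :=
  reduced_space_exactness_general φ lam hlam ip1 hsymm hadd hsmul heig f m idx hdist hexc₁ hexc₂ r t
    ht0 hmono hmr vs hvs s
end

section
/- For distinct snapshots 0 = t₀ < t₁ < ⋯ < t_r, if the number m of distinct eigenvalues excited by f satisfies m ≥ r+1, then the snapshot set {v(t₀), …, v(t_r)} is linearly independent, where v(t) = Σ_k ⟨f,φ_k⟩₀/(1+t²λ_k²) φ_k. -/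
open scoped RealInnerProductSpace

/-!
In the eigenbasis the `i`-th snapshot has coordinates `⟪f, φ k⟫ * (1 + tᵢ² μ)⁻¹` with `μ = λ_k²`,
so a linear relation `∑ᵢ cᵢ v(tᵢ) = 0` gives `∑ᵢ cᵢ (1 + tᵢ² μ)⁻¹ = 0` at each of the
`m ≥ r + 1` excited eigenvalues `μ`. Since `(1 + s μ)⁻¹ = μ⁻¹ (μ⁻¹ + s)⁻¹`, this is a Cauchy
system `∑ᵢ cᵢ (y - aᵢ)⁻¹ = 0` at the points `y = μ⁻¹`, with distinct nodes `aᵢ = -tᵢ²`.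
Multiplied by `∏ᵢ (y - aᵢ)` it becomes a polynomial of degree `≤ r` with more than `r` roots,
hence zero, and its value `cᵢ ∏_{j ≠ i} (aᵢ - aⱼ)` at the node `aᵢ` forces `cᵢ = 0`.
-/

open Finset Polynomial Lagrange in
theorem linearIndependent_inv_sub {F ι : Type*} [Field F] [Fintype ι] {a : ι → F}
    (ha : Function.Injective a) {Y : Finset F} (hcard : Fintype.card ι ≤ #Y)
    (hY : ∀ y ∈ Y, ∀ i, y ≠ a i) :
    LinearIndependent F fun i (y : Y) => ((y : F) - a i)⁻¹ := by
  classical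
  have ha' : Set.InjOn a (univ : Finset ι) := ha.injOn
  have hw : ∀ i, nodalWeight univ a i ≠ 0 := fun i => nodalWeight_ne_zero ha' (mem_univ i)
  rw [Fintype.linearIndependent_iff]
  intro c hc i
  -- Barycentric form: off the nodes, this interpolant is `nodal a * ∑ i, c i * (X - a i)⁻¹`.
  set r : ι → F := fun i => c i / nodalWeight univ a i
  have hP : interpolate univ a r = 0 := by
    refine eq_zero_of_degree_lt_of_eval_finset_eq_zero Y
      ((degree_interpolate_lt r ha').trans_le (by exact_mod_cast hcard)) fun y hy => ?_
    rw [eval_interpolate_not_at_node r fun i _ => hY y hy i]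
    have hsum := congrFun hc ⟨y, hy⟩
    simp only [Finset.sum_apply, Pi.smul_apply, smul_eq_mul, Pi.zero_apply] at hsum
    refine mul_eq_zero_of_right _ ((sum_congr rfl fun j _ => ?_).trans hsum)
    dsimp only [r]
    field_simp [hw j]
  have hri := eval_interpolate_at_node r ha' (mem_univ i)
  rw [hP, eval_zero, eq_comm, div_eq_zero_iff] at hri
  exact hri.resolve_right (hw i)

theorem LinearIndependent.mul_comp_of_subset_image {ι K X R : Type*} [CommRing R]
    [NoZeroDivisors R] {g : ι → X → R} {T : Set X}
    (hg : LinearIndependent R fun i (x : T) => g i x) (e : K → X) (w : K → R)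
    (hT : T ⊆ e '' {k | w k ≠ 0}) :
    LinearIndependent R fun i k => w k * g i (e k) := by
  rw [linearIndependent_iff'] at hg ⊢
  intro s c hc
  refine hg s c (funext fun ⟨x, hx⟩ => ?_)
  obtain ⟨k, hk, rfl⟩ := hT hx
  have hck := congrFun hc k
  simp only [Finset.sum_apply, Pi.smul_apply, smul_eq_mul, Pi.zero_apply, mul_left_comm (c _),
    ← Finset.mul_sum] at hck ⊢
  exact (mul_eq_zero.mp hck).resolve_left hk

open Finset in
theorem linearIndependent_inv_one_add_mul {F ι : Type*} [Field F] [Fintype ι] {s : ι → F}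
    (hs : Function.Injective s) {M : Finset F} (hcard : Fintype.card ι ≤ #M)
    (hM : ∀ μ ∈ M, μ ≠ 0 ∧ ∀ i, 1 + s i * μ ≠ 0) :
    LinearIndependent F fun i (μ : M) => (1 + s i * μ)⁻¹ := by
  classical
  have hY : ∀ y ∈ M.image (·⁻¹), ∀ i, y ≠ -s i := by
    simp only [mem_image, forall_exists_index, and_imp]
    rintro _ μ hμ rfl i h
    refine (hM μ hμ).2 i ?_
    rw [neg_eq_iff_eq_neg.mp h.symm, neg_mul, inv_mul_cancel₀ (hM μ hμ).1, add_neg_cancel]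
  have hT : ↑(M.image (·⁻¹)) ⊆ (fun μ : M => (μ : F)⁻¹) '' {μ | (μ : F)⁻¹ ≠ 0} := by
    simp only [coe_image, Set.image_subset_iff]
    intro μ hμ
    exact ⟨⟨μ, hμ⟩, inv_ne_zero (hM μ hμ).1, rfl⟩
  have hcauchy : (fun i (μ : M) => (1 + s i * μ)⁻¹) =
      fun i (μ : M) => (μ : F)⁻¹ * ((μ : F)⁻¹ - -s i)⁻¹ := by
    ext i μ
    rw [sub_neg_eq_add, ← mul_inv, mul_add, mul_inv_cancel₀ (hM μ μ.2).1, mul_comm]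
  rw [hcauchy]
  exact (linearIndependent_inv_sub (neg_injective.comp hs)
    (hcard.trans (card_image_of_injective M inv_injective).ge) hY).mul_comp_of_subset_image
    (g := fun i y => (y - -s i)⁻¹) _ _ hT

theorem Module.Basis.linearIndependent_sum_smul {ι κ R M : Type*} [Semiring R]
    [AddCommMonoid M] [Module R M] [Fintype κ] (b : Basis κ R M) {c : ι → κ → R}
    (hc : LinearIndependent R c) : LinearIndependent R fun i => ∑ k, c i k • b k := by
  refine .of_comp b.equivFun.toLinearMap ?_
  simpa only [Function.comp_def, ← b.equivFun_symm_apply, LinearEquiv.coe_coe,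
    LinearEquiv.apply_symm_apply] using hc

open Finset in
/-- If the number `m` of distinct eigenvalues excited by `f`
satisfies `m ≥ r+1`, then the snapshots `v(t₀),…,v(t_r)` at distinct points
`0 = t₀ < t₁ < ⋯ < t_r` are linearly independent, where
`v(t) = Σ_k ⟨f,φ_k⟩₀/(1+t²λ_k²) φ_k`. -/
theorem snapshots_linearly_independent
    {V : Type*} [NormedAddCommGroup V] [InnerProductSpace ℝ V] {N : ℕ}
    (φ : OrthonormalBasis (Fin N) ℝ V) (lam : Fin N → ℝ) (hlam : ∀ k, 0 < lam k)
    (f : V) (m : ℕ)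
    (hm : ({x : ℝ | ∃ k, x = (lam k) ^ 2 ∧ ⟪f, φ k⟫ ≠ 0}).ncard = m)
    (r : ℕ) (t : Fin (r + 1) → ℝ) (ht0 : t 0 = 0) (hmono : StrictMono t)
    (hmr : r + 1 ≤ m) :
    LinearIndependent ℝ
      (fun i : Fin (r + 1) =>
        ∑ k, (⟪f, φ k⟫ / (1 + (t i) ^ 2 * (lam k) ^ 2)) • φ k) := by
  have ht : ∀ i, 0 ≤ t i := fun i => ht0 ▸ hmono.monotone (Fin.zero_le i)
  have hs : Function.Injective fun i => t i ^ 2 := fun i j hij =>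
    hmono.injective <| (sq_eq_sq₀ (ht i) (ht j)).mp hij
  set M := (univ.filter fun k => ⟪f, φ k⟫ ≠ 0).image fun k => lam k ^ 2
  have hexcited : {x : ℝ | ∃ k, x = lam k ^ 2 ∧ ⟪f, φ k⟫ ≠ 0} = M := by
    ext x; simp [M, eq_comm, and_comm]
  have hcard : Fintype.card (Fin (r + 1)) ≤ #M := by
    rwa [Fintype.card_fin, ← Set.ncard_coe_finset, ← hexcited, hm]
  have hM : ∀ μ ∈ M, μ ≠ 0 ∧ ∀ i, 1 + t i ^ 2 * μ ≠ 0 := by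
    simp only [M, mem_image, mem_filter, mem_univ, true_and, forall_exists_index, and_imp]
    rintro _ k - rfl
    exact ⟨(pow_pos (hlam k) 2).ne', fun i => by positivity⟩
  simp_rw [div_eq_mul_inv]
  refine φ.toBasis.linearIndependent_sum_smul
    ((linearIndependent_inv_one_add_mul hs hcard hM).mul_comp_of_subset_image
      (g := fun i μ => (1 + t i ^ 2 * μ)⁻¹) (fun k => lam k ^ 2) (fun k => ⟪f, φ k⟫) ?_)
  rw [← hexcited]
  rintro _ ⟨k, rfl, hk⟩
  exact ⟨k, hk, rfl⟩
end
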